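/- (Some AIXIs are stupid, core construction.) Assume Γ_1 > 0 and e⁰ ∈ E with r(e⁰) = 0. Let ξ be a CCS with full support such that V^π_ξ(h) > 0 for every policy π and every history h. Then for every ε > 0 there exist a policy π₀, ε' ∈ (0,1], and ξ' := (1/2)·ν + (ε'/2)·ξ with ν the π₀-dogmatic environment for ξ, such that every ξ'-optimal policy π* satisfies Υ_ξ(π*) < (inf over all policies π of Υ_ξ(π)) + ε. -/

import Mathlib

open scoped Classical

/-- A history: a finite alternating sequence of action–percept pairs. -/
abbrev Hist (A E : Type*) := List (A × E)

/-- A policy maps histories to actions. -/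
abbrev Policy (A E : Type*) := Hist A E → A

/-- A chronological conditional semimeasure (CCS, environment):
values in `[0,1]`, and the chronological semimeasure condition. -/
structure CCS (A E : Type*) [Fintype E] where
  val : Hist A E → ℝ
  nonneg : ∀ h, 0 ≤ val h
  le_one : ∀ h, val h ≤ 1
  chrono : ∀ (h : Hist A E) (a : A), (∑ e : E, val (h ++ [(a, e)])) ≤ val h

/-- `Gam γ t = Γ_t = ∑_{i ≥ t} γ_i`, the discount normalization factor. -/
noncomputable def Gam (γ : ℕ → ℝ) (t : ℕ) : ℝ := ∑' i : ℕ, γ (t + i)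

/-- Extend a history by a list of percepts, with actions chosen by the policy `π`. -/
def extendH {A E : Type*} (π : Policy A E) : Hist A E → List E → Hist A E
  | h, [] => h
  | h, e :: es => extendH π (h ++ [(π h, e)]) es

/-- The value `V^π_ν(ae_{<t})` of policy `π` in environment `ν` given history `h = ae_{<t}`
(with `t = h.length + 1`); `0` whenever `Γ_t ≤ 0` or `ν(e_{<t} ∣ a_{<t}) ≤ 0`. -/
noncomputable def V {A E : Type*} [Fintype E] (γ : ℕ → ℝ) (r : E → ℝ)
    (π : Policy A E) (ν : CCS A E) (h : Hist A E) : ℝ :=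
  if 0 < Gam γ (h.length + 1) ∧ 0 < ν.val h then
    (1 / (Gam γ (h.length + 1) * ν.val h)) *
      ∑' n : ℕ, γ (h.length + 1 + n) *
        ∑ es : Fin (n + 1) → E,
          r (es (Fin.last n)) * ν.val (extendH π h (List.ofFn es))
  else 0

/-- The value `V^π_ν(h a)` of a history ending in the action `a`:
the action at time `t` is `a`, and `π` is followed from time `t+1` on. -/
noncomputable def Vact {A E : Type*} [Fintype E] (γ : ℕ → ℝ) (r : E → ℝ)
    (π : Policy A E) (ν : CCS A E) (h : Hist A E) (a : A) : ℝ :=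
  V γ r (fun h' => if h' = h then a else π h') ν h

/-- The optimal value `V^*_ν(h) = sup_π V^π_ν(h)`. -/
noncomputable def VOpt {A E : Type*} [Fintype E] (γ : ℕ → ℝ) (r : E → ℝ)
    (ν : CCS A E) (h : Hist A E) : ℝ :=
  ⨆ π : Policy A E, V γ r π ν h

/-- The optimal value `V^*_ν(h a)` of a history ending in an action. -/
noncomputable def VOptAct {A E : Type*} [Fintype E] (γ : ℕ → ℝ) (r : E → ℝ)
    (ν : CCS A E) (h : Hist A E) (a : A) : ℝ :=
  ⨆ π : Policy A E, Vact γ r π ν h a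

/-- A history is consistent with `π` iff each of its actions is the one chosen by `π`. -/
def Consistent {A E : Type*} (π : Policy A E) (h : Hist A E) : Prop :=
  ∀ (k : ℕ) (hk : k < h.length), (h.get ⟨k, hk⟩).1 = π (h.take k)

/-- Auxiliary function for the dogmatic environment: `pre` is the consistent
prefix processed so far, the second argument is the rest of the history. -/
noncomputable def dogmaAux {A E : Type*} [Fintype E] (ξ : CCS A E) (π : Policy A E)
    (e0 : E) : Hist A E → Hist A E → ℝ
  | pre, [] => ξ.val pre
  | pre, (a, e) :: rest =>
    if a = π pre then dogmaAux ξ π e0 (pre ++ [(a, e)]) rest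
    else if e = e0 ∧ ∀ p ∈ rest, p.2 = e0 then ξ.val pre else 0

/-- The `π`-dogmatic environment for `ξ`: mimics `ξ` while the actions follow `π`;
from the first deviation on it deterministically emits `e0` and freezes the mass. -/
noncomputable def dogma {A E : Type*} [Fintype E] (ξ : CCS A E) (π : Policy A E)
    (e0 : E) (h : Hist A E) : ℝ :=
  dogmaAux ξ π e0 [] h

/-- A CCS has full support iff it is positive on every history. -/
def FullSupport {A E : Type*} [Fintype E] (ξ : CCS A E) : Prop :=
  ∀ h : Hist A E, 0 < ξ.val h


/-!
Let `π₀` be within `ε/2` of the worst policy and choose a horizon `N` after which the remaining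
discount mass `Γ_{N+2}/Γ_1` is below `ε/2`. On the finitely many `π₀`-consistent histories
`extendH π₀ [] l` of length at most `N`, the `ξ`-value of `π₀` is bounded below by some `m > 0`;
take `ε' < m`. Along `π₀` the dogmatic environment coincides with `ξ`, so from such a history
following `π₀` has `ξ'`-value `V^{π₀}_ξ ≥ m`, whereas after a deviation the dogmatic part only
emits the reward-free percept `e0`, leaving the `(ε'/2)·ξ` part, worth at most `ε'/(1+ε') < m`.
Hence every `ξ'`-optimal policy agrees with `π₀` during the first `N + 1` steps, and its
`ξ`-value exceeds that of `π₀` by at most the tail `Γ_{N+2}/Γ_1`.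
-/

open Filter Topology

section Trajectory

variable {A E : Type*}

def trajectory (π : Policy A E) : Hist A E → List E → Hist A E
  | _, [] => []
  | h, e :: es => (π h, e) :: trajectory π (h ++ [(π h, e)]) es

lemma extendH_eq_append_trajectory (π : Policy A E) :
    ∀ (h : Hist A E) (l : List E), extendH π h l = h ++ trajectory π h l
  | h, [] => (List.append_nil h).symm
  | h, e :: es => by
    rw [extendH, trajectory, extendH_eq_append_trajectory π _ es, List.append_assoc]
    rfl

lemma map_snd_trajectory (π : Policy A E) :
    ∀ (h : Hist A E) (l : List E), (trajectory π h l).map Prod.snd = l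
  | _, [] => rfl
  | h, e :: es => by rw [trajectory, List.map_cons, map_snd_trajectory π _ es]

lemma extendH_append (π : Policy A E) :
    ∀ (h : Hist A E) (l l' : List E), extendH π h (l ++ l') = extendH π (extendH π h l) l'
  | _, [], _ => rfl
  | h, e :: es, l' => extendH_append π (h ++ [(π h, e)]) es l'

lemma extendH_eq_of_agree {π π' : Policy A E} {h : Hist A E} {N : ℕ}
    (hagree : ∀ l : List E, l.length ≤ N → π (extendH π' h l) = π' (extendH π' h l))
    (l : List E) (hl : l.length ≤ N + 1) : extendH π h l = extendH π' h l := by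
  induction l using List.reverseRecOn with
  | nil => rfl
  | append_singleton l e ih =>
    rw [List.length_append, List.length_singleton] at hl
    rw [extendH_append, extendH_append, ih (by omega)]
    simp only [extendH, hagree l (by omega)]

end Trajectory

section Dogma

variable {A E : Type*} [Fintype E] (ξ : CCS A E) (e0 : E)

lemma dogmaAux_trajectory_append (π : Policy A E) :
    ∀ (pre : Hist A E) (l : List E) (tail : Hist A E),
      dogmaAux ξ π e0 pre (trajectory π pre l ++ tail) = dogmaAux ξ π e0 (extendH π pre l) tail
  | _, [], _ => rfl
  | pre, e :: es, tail => by
    rw [trajectory, List.cons_append, dogmaAux, if_pos rfl]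
    exact dogmaAux_trajectory_append π _ es tail

lemma dogma_extendH_self (π : Policy A E) (l : List E) :
    dogma ξ π e0 (extendH π [] l) = ξ.val (extendH π [] l) := by
  have key := dogmaAux_trajectory_append ξ e0 π [] l []
  rwa [List.append_nil, ← List.nil_append (trajectory π [] l),
    ← extendH_eq_append_trajectory] at key

lemma dogma_extendH_eq_zero_of_ne {π₀ : Policy A E} (π : Policy A E) (l : List E)
    (hdev : π (extendH π₀ [] l) ≠ π₀ (extendH π₀ [] l)) (es : List E) (hes : ∃ e ∈ es, e ≠ e0) :
    dogma ξ π₀ e0 (extendH π (extendH π₀ [] l) es) = 0 := by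
  obtain _ | ⟨e, es⟩ := es
  · simp at hes
  set h := extendH π₀ [] l
  have hsplit : extendH π h (e :: es) =
      trajectory π₀ [] l ++ (π h, e) :: trajectory π (h ++ [(π h, e)]) es := by
    rw [extendH_eq_append_trajectory, trajectory]
    congr 1
    exact (extendH_eq_append_trajectory π₀ [] l).trans (List.nil_append _)
  rw [dogma, hsplit, dogmaAux_trajectory_append, dogmaAux, if_neg hdev, if_neg]
  rintro ⟨rfl, hrest⟩
  obtain ⟨e', he', hne⟩ := hes
  rw [← map_snd_trajectory π (h ++ [(π h, e)]) es] at he'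
  obtain he' | he' := List.mem_cons.1 he'
  · exact hne he'
  · obtain ⟨p, hp, rfl⟩ := List.mem_map.1 he'
    exact hne (hrest p hp)

lemma reward_mul_dogma_eq_zero_of_ne {r : E → ℝ} (hr0 : r e0 = 0) {π₀ : Policy A E}
    (π : Policy A E) (l : List E) (hdev : π (extendH π₀ [] l) ≠ π₀ (extendH π₀ [] l))
    (n : ℕ) (es : Fin (n + 1) → E) :
    r (es (Fin.last n)) * dogma ξ π₀ e0 (extendH π (extendH π₀ [] l) (List.ofFn es)) = 0 := by
  by_cases hlast : es (Fin.last n) = e0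
  · rw [hlast, hr0, zero_mul]
  · rw [dogma_extendH_eq_zero_of_ne ξ e0 π l hdev _
      ⟨_, List.mem_ofFn.2 ⟨Fin.last n, rfl⟩, hlast⟩, mul_zero]

end Dogma

section Value

variable {A E : Type*} [Fintype E] (γ : ℕ → ℝ) (r : E → ℝ)

lemma hasSum_Gam (hγs : Summable γ) (t : ℕ) : HasSum (fun i => γ (t + i)) (Gam γ t) := by
  have h := ((summable_nat_add_iff t).2 hγs).hasSum
  simp_rw [add_comm _ t] at h
  exact h

lemma Gam_nonneg (hγ0 : ∀ t, 0 ≤ γ t) (t : ℕ) : 0 ≤ Gam γ t :=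
  tsum_nonneg fun _ => hγ0 _

lemma tendsto_Gam_atTop : Tendsto (Gam γ) atTop (𝓝 0) :=
  (tendsto_sum_nat_add γ).congr fun t => tsum_congr fun k => congrArg γ (add_comm k t)

lemma sum_extendH_le (μ : CCS A E) (π : Policy A E) :
    ∀ (n : ℕ) (h : Hist A E), ∑ es : Fin n → E, μ.val (extendH π h (List.ofFn es)) ≤ μ.val h
  | 0, h => by simp [extendH]
  | n + 1, h => calc
      ∑ es : Fin (n + 1) → E, μ.val (extendH π h (List.ofFn es))
          = ∑ e : E, ∑ es : Fin n → E, μ.val (extendH π (h ++ [(π h, e)]) (List.ofFn es)) := by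
            rw [← (Fin.consEquiv fun _ => E).sum_comp, Fintype.sum_prod_type]
            simp [Fin.consEquiv, List.ofFn_succ, extendH]
      _ ≤ ∑ e : E, μ.val (h ++ [(π h, e)]) :=
            Finset.sum_le_sum fun e _ => sum_extendH_le μ π n _
      _ ≤ μ.val h := μ.chrono h (π h)

noncomputable def valueTerm (π : Policy A E) (μ : CCS A E) (h : Hist A E) (n : ℕ) : ℝ :=
  γ (h.length + 1 + n) *
    ∑ es : Fin (n + 1) → E, r (es (Fin.last n)) * μ.val (extendH π h (List.ofFn es))

lemma V_eq_valueTerm (π : Policy A E) (μ : CCS A E) (h : Hist A E) :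
    V γ r π μ h = if 0 < Gam γ (h.length + 1) ∧ 0 < μ.val h then
      1 / (Gam γ (h.length + 1) * μ.val h) * ∑' n, valueTerm γ r π μ h n else 0 :=
  rfl

variable {γ r}

lemma valueTerm_nonneg (hγ0 : ∀ t, 0 ≤ γ t) (hr : ∀ e, 0 ≤ r e ∧ r e ≤ 1)
    (π : Policy A E) (μ : CCS A E) (h : Hist A E) (n : ℕ) : 0 ≤ valueTerm γ r π μ h n :=
  mul_nonneg (hγ0 _) (Finset.sum_nonneg fun _ _ => mul_nonneg (hr _).1 (μ.nonneg _))

lemma valueTerm_le (hγ0 : ∀ t, 0 ≤ γ t) (hr : ∀ e, 0 ≤ r e ∧ r e ≤ 1)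
    (π : Policy A E) (μ : CCS A E) (h : Hist A E) (n : ℕ) :
    valueTerm γ r π μ h n ≤ γ (h.length + 1 + n) * μ.val h := by
  refine mul_le_mul_of_nonneg_left ?_ (hγ0 _)
  calc ∑ es : Fin (n + 1) → E, r (es (Fin.last n)) * μ.val (extendH π h (List.ofFn es))
      ≤ ∑ es : Fin (n + 1) → E, μ.val (extendH π h (List.ofFn es)) :=
        Finset.sum_le_sum fun _ _ => mul_le_of_le_one_left (μ.nonneg _) (hr _).2
    _ ≤ μ.val h := sum_extendH_le μ π (n + 1) h

lemma summable_valueTerm (hγ0 : ∀ t, 0 ≤ γ t) (hγs : Summable γ) (hr : ∀ e, 0 ≤ r e ∧ r e ≤ 1)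
    (π : Policy A E) (μ : CCS A E) (h : Hist A E) : Summable (valueTerm γ r π μ h) :=
  Summable.of_nonneg_of_le (valueTerm_nonneg hγ0 hr π μ h) (valueTerm_le hγ0 hr π μ h)
    ((hasSum_Gam γ hγs _).summable.mul_right _)

lemma V_nonneg (hγ0 : ∀ t, 0 ≤ γ t) (hr : ∀ e, 0 ≤ r e ∧ r e ≤ 1)
    (π : Policy A E) (μ : CCS A E) (h : Hist A E) : 0 ≤ V γ r π μ h := by
  rw [V_eq_valueTerm]
  split_ifs with hpos
  · exact mul_nonneg (one_div_pos.2 (mul_pos hpos.1 hpos.2)).le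
      (tsum_nonneg (valueTerm_nonneg hγ0 hr π μ h))
  · exact le_rfl

lemma V_le_one (hγ0 : ∀ t, 0 ≤ γ t) (hγs : Summable γ) (hr : ∀ e, 0 ≤ r e ∧ r e ≤ 1)
    (π : Policy A E) (μ : CCS A E) (h : Hist A E) : V γ r π μ h ≤ 1 := by
  rw [V_eq_valueTerm]
  split_ifs with hpos
  · have hD := mul_pos hpos.1 hpos.2
    have hsum : ∑' n, valueTerm γ r π μ h n ≤ Gam γ (h.length + 1) * μ.val h :=
      hasSum_le (valueTerm_le hγ0 hr π μ h) (summable_valueTerm hγ0 hγs hr π μ h).hasSum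
        ((hasSum_Gam γ hγs _).mul_right _)
    rwa [one_div, inv_mul_le_iff₀ hD, mul_one]
  · exact zero_le_one

lemma V_le_VOpt (hγ0 : ∀ t, 0 ≤ γ t) (hγs : Summable γ) (hr : ∀ e, 0 ≤ r e ∧ r e ≤ 1)
    (π : Policy A E) (μ : CCS A E) (h : Hist A E) : V γ r π μ h ≤ VOpt γ r μ h :=
  le_ciSup (f := fun π => V γ r π μ h)
    ⟨1, by rintro _ ⟨π', rfl⟩; exact V_le_one hγ0 hγs hr π' μ h⟩ π

lemma V_eq_div_mul_of_scaled {π : Policy A E} {μ ν : CCS A E} {h : Hist A E} {c d : ℝ}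
    (hd : 0 < d) (hh : μ.val h = d * ν.val h)
    (hext : ∀ n (es : Fin (n + 1) → E),
      r (es (Fin.last n)) * μ.val (extendH π h (List.ofFn es)) =
        c * (r (es (Fin.last n)) * ν.val (extendH π h (List.ofFn es)))) :
    V γ r π μ h = c / d * V γ r π ν h := by
  have hterm : ∀ n, valueTerm γ r π μ h n = c * valueTerm γ r π ν h n := by
    intro n
    simp only [valueTerm, hext, ← Finset.mul_sum]
    ring
  have hpos : 0 < μ.val h ↔ 0 < ν.val h := by rw [hh]; exact mul_pos_iff_of_pos_left hd
  rw [V_eq_valueTerm, V_eq_valueTerm]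
  simp only [hpos]
  rw [tsum_congr hterm, tsum_mul_left, hh]
  split_ifs
  · field_simp
  · rw [mul_zero]

lemma valueTerm_eq_of_extendH_eq {π π' : Policy A E} {μ : CCS A E} {h : Hist A E} {n : ℕ}
    (heq : ∀ es : Fin (n + 1) → E, extendH π h (List.ofFn es) = extendH π' h (List.ofFn es)) :
    valueTerm γ r π μ h n = valueTerm γ r π' μ h n := by
  simp only [valueTerm, heq]

lemma V_le_add_of_valueTerm_eq (hγ0 : ∀ t, 0 ≤ γ t) (hγs : Summable γ)
    (hr : ∀ e, 0 ≤ r e ∧ r e ≤ 1) {π π' : Policy A E} {μ : CCS A E} {h : Hist A E} (K : ℕ)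
    (hagree : ∀ n < K, valueTerm γ r π μ h n = valueTerm γ r π' μ h n) :
    V γ r π μ h ≤ V γ r π' μ h + Gam γ (h.length + 1 + K) / Gam γ (h.length + 1) := by
  have htail_nonneg := div_nonneg (Gam_nonneg γ hγ0 (h.length + 1 + K))
    (Gam_nonneg γ hγ0 (h.length + 1))
  by_cases hpos : 0 < Gam γ (h.length + 1) ∧ 0 < μ.val h
  swap
  · rw [V_eq_valueTerm, if_neg hpos]
    linarith [V_nonneg hγ0 hr π' μ h]
  have hs := summable_valueTerm hγ0 hγs hr π μ h
  have hhead : ∑ n ∈ Finset.range K, valueTerm γ r π μ h n ≤ ∑' n, valueTerm γ r π' μ h n := by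
    rw [Finset.sum_congr rfl fun n hn => hagree n (Finset.mem_range.1 hn)]
    exact (summable_valueTerm hγ0 hγs hr π' μ h).sum_le_tsum _
      fun n _ => valueTerm_nonneg hγ0 hr π' μ h n
  have htail : ∑' n, valueTerm γ r π μ h (n + K) ≤ Gam γ (h.length + 1 + K) * μ.val h :=
    hasSum_le
      (fun n => (valueTerm_le hγ0 hr π μ h (n + K)).trans_eq (by rw [add_comm n K, ← add_assoc]))
      ((summable_nat_add_iff K).2 hs).hasSum ((hasSum_Gam γ hγs _).mul_right _)
  have hD := mul_pos hpos.1 hpos.2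
  rw [V_eq_valueTerm, V_eq_valueTerm, if_pos hpos, if_pos hpos, ← hs.sum_add_tsum_nat_add K]
  calc 1 / (Gam γ (h.length + 1) * μ.val h) *
        (∑ n ∈ Finset.range K, valueTerm γ r π μ h n + ∑' n, valueTerm γ r π μ h (n + K))
      ≤ 1 / (Gam γ (h.length + 1) * μ.val h) *
        (∑' n, valueTerm γ r π' μ h n + Gam γ (h.length + 1 + K) * μ.val h) :=
        mul_le_mul_of_nonneg_left (add_le_add hhead htail) (one_div_pos.2 hD).le
    _ = _ := by
        have := hpos.2.ne'
        field_simp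

end Value

lemma optimal_action_eq_of_lt_V {A E : Type*} [Fintype E] {γ : ℕ → ℝ} (hγ0 : ∀ t, 0 ≤ γ t)
    (hγs : Summable γ) {r : E → ℝ} (hr : ∀ e, 0 ≤ r e ∧ r e ≤ 1) {e0 : E} (hr0 : r e0 = 0)
    {ξ ξ' : CCS A E} {π₀ πs : Policy A E} {ε' : ℝ} (hε' : 0 < ε')
    (hξ' : ∀ h, ξ'.val h = 1 / 2 * dogma ξ π₀ e0 h + ε' / 2 * ξ.val h)
    (hopt : ∀ h, V γ r πs ξ' h = VOpt γ r ξ' h)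
    (l : List E) (hlt : ε' < V γ r π₀ ξ (extendH π₀ [] l)) :
    πs (extendH π₀ [] l) = π₀ (extendH π₀ [] l) := by
  set h := extendH π₀ [] l
  by_contra hdev
  have hξ'_follow : ∀ l', ξ'.val (extendH π₀ h l') = (1 + ε') / 2 * ξ.val (extendH π₀ h l') := by
    intro l'
    rw [hξ', ← extendH_append, dogma_extendH_self]
    ring
  have hξ'h : ξ'.val h = (1 + ε') / 2 * ξ.val h := hξ'_follow []
  have hV₀ : V γ r π₀ ξ' h = V γ r π₀ ξ h := by
    have hscaled := V_eq_div_mul_of_scaled (γ := γ) (r := r) (π := π₀) (c := (1 + ε') / 2)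
      (by positivity) hξ'h fun n es => by rw [hξ'_follow]; ring
    rwa [div_self (by positivity), one_mul] at hscaled
  have hVs : V γ r πs ξ' h < ε' := by
    rw [V_eq_div_mul_of_scaled (γ := γ) (r := r) (π := πs) (c := ε' / 2) (by positivity) hξ'h
      fun n es => by
        rw [hξ', mul_add, mul_left_comm, reward_mul_dogma_eq_zero_of_ne ξ e0 hr0 πs l hdev]
        ring]
    calc ε' / 2 / ((1 + ε') / 2) * V γ r πs ξ h ≤ ε' / 2 / ((1 + ε') / 2) :=
          mul_le_of_le_one_right (by positivity) (V_le_one hγ0 hγs hr πs ξ h)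
      _ < ε' := by
          rw [div_lt_iff₀ (by positivity)]
          nlinarith
  have hle : V γ r π₀ ξ' h ≤ V γ r πs ξ' h := hopt h ▸ V_le_VOpt hγ0 hγs hr π₀ ξ' h
  linarith

theorem some_AIXIs_are_stupid_general {A E : Type*} [Fintype A] [Nonempty A] [Fintype E]
    (γ : ℕ → ℝ) (hγ0 : ∀ t, 0 ≤ γ t) (hγs : Summable γ)
    (r : E → ℝ) (hr : ∀ e : E, 0 ≤ r e ∧ r e ≤ 1)
    (e0 : E) (hr0 : r e0 = 0)
    (ξ : CCS A E)
    (hval : ∀ (π : Policy A E) (h : Hist A E), 0 < V γ r π ξ h)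
    (ε : ℝ) (hε : 0 < ε) :
    ∃ (π₀ : Policy A E) (ε' : ℝ), 0 < ε' ∧ ε' ≤ 1 ∧
      ∀ ν ξ' : CCS A E,
        (∀ h : Hist A E, ν.val h = dogma ξ π₀ e0 h) →
        (∀ h : Hist A E, ξ'.val h = (1 / 2) * ν.val h + (ε' / 2) * ξ.val h) →
        ∀ πs : Policy A E, (∀ h : Hist A E, V γ r πs ξ' h = VOpt γ r ξ' h) →
          V γ r πs ξ [] < (⨅ π : Policy A E, V γ r π ξ []) + ε := by
  obtain ⟨π₀, hπ₀⟩ : ∃ π₀, V γ r π₀ ξ [] < (⨅ π, V γ r π ξ []) + ε / 2 :=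
    exists_lt_of_ciInf_lt (by linarith)
  obtain ⟨N, hN⟩ : ∃ N : ℕ, Gam γ (N + 2) / Gam γ 1 < ε / 2 := by
    obtain ⟨N, hN⟩ := (((tendsto_Gam_atTop γ).div_const (Gam γ 1)).eventually
      (eventually_lt_nhds (b := ε / 2) (by simpa using half_pos hε))).exists_forall_of_atTop
    exact ⟨N, hN (N + 2) (by omega)⟩
  obtain ⟨l₀, -, hl₀⟩ := Set.exists_min_image {l : List E | l.length ≤ N}
    (fun l => V γ r π₀ ξ (extendH π₀ [] l)) (List.finite_length_le E N) ⟨[], Nat.zero_le N⟩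
  set ε' := min 1 (V γ r π₀ ξ (extendH π₀ [] l₀) / 2)
  have hε' : 0 < ε' := lt_min one_pos (half_pos (hval π₀ _))
  refine ⟨π₀, ε', hε', min_le_left _ _, ?_⟩
  rintro ν ξ' hν hξ' πs hopt
  have hfollow : ∀ l : List E, l.length ≤ N → πs (extendH π₀ [] l) = π₀ (extendH π₀ [] l) :=
    fun l hl => optimal_action_eq_of_lt_V hγ0 hγs hr hr0 hε' (fun h => by rw [hξ', hν]) hopt l
      (((min_le_right _ _).trans_lt (half_lt_self (hval π₀ _))).trans_le (hl₀ l hl))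
  have hclose : V γ r πs ξ [] ≤ V γ r π₀ ξ [] + Gam γ (1 + (N + 1)) / Gam γ 1 :=
    V_le_add_of_valueTerm_eq hγ0 hγs hr (π' := π₀) (μ := ξ) (N + 1) fun n hn =>
      valueTerm_eq_of_extendH_eq fun es => extendH_eq_of_agree hfollow _ (by simpa using hn)
  rw [show 1 + (N + 1) = N + 2 by omega] at hclose
  linarith

/-- **Some AIXIs are stupid (core construction).** There is a policy `π₀` and `ε'` such
that every optimal policy for the dogmatic mixture `ξ' = (1/2)·ν + (ε'/2)·ξ` has
`ξ`-intelligence within `ε` of the minimal intelligence. -/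
theorem some_AIXIs_are_stupid {A E : Type*} [Fintype A] [Nonempty A] [Fintype E] [Nonempty E]
    (γ : ℕ → ℝ) (hγ0 : ∀ t, 0 ≤ γ t) (hγs : Summable γ)
    (r : E → ℝ) (hr : ∀ e : E, 0 ≤ r e ∧ r e ≤ 1)
    (hΓ1 : 0 < Gam γ 1)
    (e0 : E) (hr0 : r e0 = 0)
    (ξ : CCS A E) (hfs : FullSupport ξ)
    (hval : ∀ (π : Policy A E) (h : Hist A E), 0 < V γ r π ξ h)
    (ε : ℝ) (hε : 0 < ε) :
    ∃ (π₀ : Policy A E) (ε' : ℝ), 0 < ε' ∧ ε' ≤ 1 ∧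
      ∀ ν ξ' : CCS A E,
        (∀ h : Hist A E, ν.val h = dogma ξ π₀ e0 h) →
        (∀ h : Hist A E, ξ'.val h = (1 / 2) * ν.val h + (ε' / 2) * ξ.val h) →
        ∀ πs : Policy A E, (∀ h : Hist A E, V γ r πs ξ' h = VOpt γ r ξ' h) →
          V γ r πs ξ [] < (⨅ π : Policy A E, V γ r π ξ []) + ε :=
  some_AIXIs_are_stupid_general γ hγ0 hγs r hr e0 hr0 ξ hval ε hε
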